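/- arXiv:2209.00373 — 3 statements merged into one kernel-verified Lean document; each statement's English description precedes it below -/
import Mathlib

section
/- Let 0 < r < 1 and let T be the operator on ℂ² given by the matrix [[√r, 1−r],[0, √r]]. Then T is invertible, σ(T) = {√r} ⊆ 𝔸_r, ‖T‖ = 1 (indeed σ(T*T) = {1, r²}), but cl(𝔸_r) is NOT a spectral set for T: there exist polynomials p, q ∈ ℂ[z] with q having no zeros in cl(𝔸_r) such that ‖p(T) q(T)⁻¹‖ > sup_{z ∈ cl(𝔸_r)} |p(z)/q(z)|. -/
/-!
Write `s = √r`, so that `T = s + N` with `N² = 0`. A rational function `f = p / q` regular at `s`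
then satisfies `f(T) = f(s) + f'(s) N`. For `f(z) = (z ^ (2n) - r ^ n) / z ^ n` we have `f(s) = 0`,
`f'(s) = 2 n s ^ (n - 1)` and `|f| ≤ 1 + r ^ n` on the closed annulus, while `‖N‖ ≥ 1 - r`.
Putting `s = exp (-λ)` and `t = n λ`, and using `sinh λ ≥ λ`, the required inequality
`1 + r ^ n < 2 n (1 - r) s ^ (n - 1)` follows from `cosh t < 2 t`, true for `t ∈ [1, 2]` by
convexity; a suitable `n` exists when `λ ≤ 1`, and `n = 1` works when `r < 1 / 3`.

`‖T‖ = 1` by the C⋆-identity: `‖T‖²` is the spectral radius of `T⋆T`, whose spectrum is `{1, r²}`.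
-/

open Polynomial ContinuousLinearMap

/-- The closed annulus `{z : ℂ | r ≤ |z| ≤ 1}`. -/
def closedAnnulus (r : ℝ) : Set ℂ := {z : ℂ | r ≤ ‖z‖ ∧ ‖z‖ ≤ 1}

/-- The open annulus `𝔸_r = {z : ℂ | r < |z| < 1}`. -/
def openAnnulus (r : ℝ) : Set ℂ := {z : ℂ | r < ‖z‖ ∧ ‖z‖ < 1}

section SquareZero

variable {R A : Type*}

theorem algebraMap_add_smul_mul_algebraMap_add_smul [CommSemiring R] [Semiring A] [Algebra R A]
    {N : A} (hN : N ^ 2 = 0) (a b c d : R) :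
    (algebraMap R A a + b • N) * (algebraMap R A c + d • N) =
      algebraMap R A (a * c) + (a * d + b * c) • N := by
  rw [add_mul, mul_add, mul_add, smul_mul_smul_comm, ← sq, hN, smul_zero, add_zero, ← map_mul,
    ← Algebra.smul_def, smul_mul_assoc, ← Algebra.commutes, ← Algebra.smul_def, smul_smul,
    smul_smul, add_smul, mul_comm b]
  abel

theorem aeval_algebraMap_add_of_sq_eq_zero [CommSemiring R] [Semiring A] [Algebra R A]
    {N : A} (hN : N ^ 2 = 0) (s : R) (p : R[X]) :
    aeval (algebraMap R A s + N) p = algebraMap R A (p.eval s) + (derivative p).eval s • N := by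
  induction p using Polynomial.induction_on with
  | C a => simp
  | add p q hp hq => simp only [map_add, hp, hq, eval_add, add_smul]; abel
  | monomial k a ih =>
    have h := algebraMap_add_smul_mul_algebraMap_add_smul hN ((C a * X ^ k).eval s)
      ((derivative (C a * X ^ k)).eval s) s 1
    rw [one_smul] at h
    rw [pow_succ, ← mul_assoc, map_mul, ih, aeval_X, h]
    generalize C a * X ^ k = p
    simp only [derivative_mul, derivative_X, eval_mul, eval_add, eval_X, eval_one]
    congr 2; ring

theorem aeval_mul_inverse_aeval_of_sq_eq_zero [Field R] [Ring A] [Algebra R A]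
    {N : A} (hN : N ^ 2 = 0) (s : R) (p q : R[X]) (hq : q.eval s ≠ 0) :
    aeval (algebraMap R A s + N) p * Ring.inverse (aeval (algebraMap R A s + N) q) =
      algebraMap R A (p.eval s / q.eval s) +
        (((derivative p).eval s * q.eval s - p.eval s * (derivative q).eval s) /
          q.eval s ^ 2) • N := by
  have hunit : IsUnit (aeval (algebraMap R A s + N) q) := by
    rw [aeval_algebraMap_add_of_sq_eq_zero hN]
    refine IsNilpotent.isUnit_add_left_of_commute ⟨2, ?_⟩ ((isUnit_iff_ne_zero.2 hq).map _)
      (Algebra.commutes _ _).symm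
    rw [_root_.smul_pow, hN, smul_zero]
  rw [eq_comm, Ring.eq_mul_inverse_iff_mul_eq _ _ _ hunit, aeval_algebraMap_add_of_sq_eq_zero hN,
    aeval_algebraMap_add_of_sq_eq_zero hN, algebraMap_add_smul_mul_algebraMap_add_smul hN]
  congr 2
  · field_simp
  · field_simp; ring

end SquareZero

theorem Matrix.mem_spectrum_fin_two_iff {K : Type*} [Field K] (A : Matrix (Fin 2) (Fin 2) K)
    (z : K) : z ∈ spectrum K A ↔ z ^ 2 - A.trace * z + A.det = 0 := by
  rw [Matrix.mem_spectrum_iff_isRoot_charpoly, Matrix.charpoly_fin_two]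
  simp

theorem Matrix.spectrum_upperTriangular_fin_two {K : Type*} [Field K] (a b d : K) :
    spectrum K !![a, b; 0, d] = {a, d} := by
  ext z
  rw [Matrix.mem_spectrum_fin_two_iff, Matrix.trace_fin_two_of, Matrix.det_fin_two_of]
  rw [show z ^ 2 - (a + d) * z + (a * d - b * 0) = (z - a) * (z - d) by ring]
  simp [sub_eq_zero]

theorem Matrix.norm_entry_le_norm_toEuclideanCLM {𝕜 n : Type*} [RCLike 𝕜] [Fintype n]
    [DecidableEq n] (A : Matrix n n 𝕜) (i j : n) :
    ‖A i j‖ ≤ ‖Matrix.toEuclideanCLM (𝕜 := 𝕜) A‖ :=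
  calc ‖A i j‖ = ‖Matrix.toEuclideanCLM (𝕜 := 𝕜) A (EuclideanSpace.single j 1) i‖ := by simp
    _ ≤ ‖Matrix.toEuclideanCLM (𝕜 := 𝕜) A (EuclideanSpace.single j 1)‖ := PiLp.norm_apply_le _ _
    _ ≤ ‖Matrix.toEuclideanCLM (𝕜 := 𝕜) A‖ * ‖EuclideanSpace.single j (1 : 𝕜)‖ := le_opNorm _ _
    _ = ‖Matrix.toEuclideanCLM (𝕜 := 𝕜) A‖ := by simp

theorem CStarAlgebra.norm_eq_one_of_spectrum_star_mul_self {A : Type*} [CStarAlgebra A] {a : A}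
    {z : ℂ} (h : spectrum ℂ (star a * a) = {1, z}) (hz : ‖z‖ ≤ 1) : ‖a‖ = 1 := by
  have hrad : spectralRadius ℂ (star a * a) = 1 := by
    rw [spectralRadius, h, iSup_insert, iSup_singleton, nnnorm_one, ENNReal.coe_one]
    exact sup_eq_left.2 (ENNReal.coe_le_one_iff.2 (by exact_mod_cast hz))
  have := CStarAlgebra.toReal_spectralRadius_star_mul_self_eq_norm_sq a
  rw [hrad, ENNReal.toReal_one] at this
  exact (pow_eq_one_iff_of_nonneg (norm_nonneg a) two_ne_zero).1 this.symm

theorem Real.cosh_lt_two_mul_of_mem_Icc {t : ℝ} (ht : t ∈ Set.Icc 1 2) : cosh t < 2 * t := by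
  obtain ⟨h1, h2⟩ := ht
  have hconv (f : ℝ → ℝ) (hf : ConvexOn ℝ Set.univ f) :
      f t ≤ (2 - t) * f 1 + (t - 1) * f 2 := by
    have h := hf.2 (Set.mem_univ 1) (Set.mem_univ 2) (show 0 ≤ 2 - t by linarith)
      (show 0 ≤ t - 1 by linarith) (by ring)
    rwa [smul_eq_mul, smul_eq_mul, smul_eq_mul, smul_eq_mul,
      show (2 - t) * 1 + (t - 1) * 2 = t by ring] at h
  have hexp := hconv exp convexOn_exp
  have hexp_neg := hconv (fun x ↦ exp (-x)) (convexOn_exp.comp_linearMap (-LinearMap.id))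
  have he := exp_one_lt_d9
  have hcosh1 : exp 1 + exp (-1) < 3.9 := by
    linarith [exp_lt_one_iff.2 (show (-1 : ℝ) < 0 by norm_num)]
  have hcosh2 : exp 2 + exp (-2) < 7.9 := by
    have h2 : exp 2 = exp 1 ^ 2 := by rw [← exp_nat_mul]; norm_num
    have hinv : exp (-2) * exp 2 = 1 := by rw [← exp_add]; norm_num
    have h2lt : exp 2 < 7.39 := by rw [h2]; nlinarith [exp_pos 1]
    nlinarith [exp_one_gt_d9, exp_pos (-2)]
  rw [cosh_eq]
  calc (exp t + exp (-t)) / 2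
      ≤ ((2 - t) * (exp 1 + exp (-1)) + (t - 1) * (exp 2 + exp (-2))) / 2 := by linarith
    _ ≤ ((2 - t) * 3.9 + (t - 1) * 7.9) / 2 := by gcongr
    _ < 2 * t := by linarith

theorem Real.neg_two_mul_log_le_inv_sub {s : ℝ} (hs0 : 0 < s) (hs1 : s ≤ 1) :
    -2 * log s ≤ s⁻¹ - s := by
  have h := self_le_sinh_iff.2 (neg_nonneg.2 (log_nonpos hs0.le hs1))
  rw [sinh_eq, neg_neg, exp_log hs0, exp_neg, exp_log hs0] at h
  linarith

theorem exists_one_add_pow_lt {s : ℝ} (hs0 : 0 < s) (hs1 : s < 1) :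
    ∃ n : ℕ, 1 + s ^ (2 * n) < 2 * n * (s⁻¹ - s) * s ^ n := by
  rcases lt_or_ge (s ^ 2) (1 / 3) with hsmall | hlarge
  · refine ⟨1, ?_⟩
    field_simp
    norm_num
    nlinarith
  set l := -Real.log s with hl
  have hl0 : 0 < l := neg_pos.2 (Real.log_neg hs0 hs1)
  have hl1 : l ≤ 1 := by
    have : Real.exp (-1) ≤ s := by nlinarith [Real.exp_neg_one_lt_half]
    have := Real.log_le_log (Real.exp_pos _) this
    rw [Real.log_exp] at this
    linarith
  set n := ⌈l⁻¹⌉₊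
  have ht1 : 1 ≤ n * l := by
    rw [← inv_mul_cancel₀ hl0.ne']; gcongr; exact Nat.le_ceil _
  have ht2 : n * l ≤ 2 := by
    have hn : (n : ℝ) < l⁻¹ + 1 := Nat.ceil_lt_add_one (inv_pos.2 hl0).le
    calc n * l ≤ (l⁻¹ + 1) * l := by gcongr
      _ = 1 + l := by field_simp
      _ ≤ 2 := by linarith
  have hsn : s ^ n = Real.exp (-(n * l)) := by
    rw [hl, ← Real.exp_log (pow_pos hs0 n), Real.log_pow]
    ring_nf
  refine ⟨n, ?_⟩
  have hsinh : 2 * l ≤ s⁻¹ - s := by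
    have := Real.neg_two_mul_log_le_inv_sub hs0 hs1.le
    linarith
  have hcosh := Real.cosh_lt_two_mul_of_mem_Icc ⟨ht1, ht2⟩
  rw [Real.cosh_eq] at hcosh
  have hprod : Real.exp (n * l) * Real.exp (-(n * l)) = 1 := by
    rw [← Real.exp_add]; simp
  rw [pow_mul', hsn]
  have he := Real.exp_pos (-(n * l))
  calc 1 + Real.exp (-(n * l)) ^ 2
      = (Real.exp (n * l) + Real.exp (-(n * l))) * Real.exp (-(n * l)) := by
        linear_combination (-1 : ℝ) * hprod
    _ < 4 * (n * l) * Real.exp (-(n * l)) := by gcongr; linarith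
    _ ≤ 2 * n * (s⁻¹ - s) * Real.exp (-(n * l)) := by
        have : 4 * (n * l) = 2 * n * (2 * l) := by ring
        rw [this]; gcongr

theorem le_norm_aeval_mul_inverse_of_eval_eq_zero (a b : ℂ) (p q : ℂ[X]) (hp : p.eval a = 0)
    (hq : q.eval a ≠ 0) :
    ‖(derivative p).eval a / q.eval a‖ * ‖b‖ ≤
      ‖aeval (Matrix.toEuclideanCLM (𝕜 := ℂ) !![a, b; 0, a]) p *
        Ring.inverse (aeval (Matrix.toEuclideanCLM (𝕜 := ℂ) !![a, b; 0, a]) q)‖ := by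
  set E : Matrix (Fin 2) (Fin 2) ℂ := !![0, b; 0, 0]
  have hsplit : Matrix.toEuclideanCLM (𝕜 := ℂ) !![a, b; 0, a] =
      algebraMap ℂ _ a + Matrix.toEuclideanCLM (𝕜 := ℂ) E := by
    rw [← AlgHomClass.commutes (Matrix.toEuclideanCLM (𝕜 := ℂ) (n := Fin 2)) a, ← map_add]
    congr 1
    ext i j; fin_cases i <;> fin_cases j <;> simp [E, Matrix.algebraMap_matrix_apply]
  have hE : Matrix.toEuclideanCLM (𝕜 := ℂ) E ^ 2 = 0 := by
    rw [← map_pow, show E ^ 2 = 0 by ext i j; fin_cases i <;> fin_cases j <;> simp [E, sq]]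
    exact map_zero _
  rw [hsplit, aeval_mul_inverse_aeval_of_sq_eq_zero hE a p q hq, hp]
  simp only [zero_div, map_zero, zero_mul, sub_zero, zero_add]
  rw [← map_smul]
  calc _ = ‖(((derivative p).eval a * q.eval a / q.eval a ^ 2) • E) 0 1‖ := by
        rw [Matrix.smul_apply, smul_eq_mul, norm_mul]; congr 2; field_simp
    _ ≤ _ := Matrix.norm_entry_le_norm_toEuclideanCLM _ 0 1

theorem norm_pow_sub_div_pow_le {r : ℝ} (hr : 0 < r) {z : ℂ} (hz : z ∈ closedAnnulus r) (n : ℕ) :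
    ‖(z ^ (2 * n) - (r : ℂ) ^ n) / z ^ n‖ ≤ 1 + r ^ n := by
  obtain ⟨hrz, hz1⟩ := hz
  have hu : 0 < ‖z‖ ^ n := pow_pos (hr.trans_le hrz) n
  have hu1 : ‖z‖ ^ n ≤ 1 := pow_le_one₀ (norm_nonneg z) hz1
  have hru : r ^ n ≤ ‖z‖ ^ n := pow_le_pow_left₀ hr.le hrz n
  rw [norm_div, norm_pow, div_le_iff₀ hu]
  calc ‖z ^ (2 * n) - (r : ℂ) ^ n‖ ≤ (‖z‖ ^ n) ^ 2 + r ^ n := by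
        refine (norm_sub_le _ _).trans_eq ?_
        rw [norm_pow, norm_pow, Complex.norm_of_nonneg hr.le, ← pow_mul, mul_comm]
    _ ≤ (1 + r ^ n) * ‖z‖ ^ n := by nlinarith

theorem spectrum_adjoint_mul_self_toEuclideanCLM_sqrt {r : ℝ} (hr : 0 ≤ r) :
    spectrum ℂ (adjoint (Matrix.toEuclideanCLM (𝕜 := ℂ)
      !![(Real.sqrt r : ℂ), ((1 : ℂ) - (r : ℂ)); 0, (Real.sqrt r : ℂ)]) *
      Matrix.toEuclideanCLM (𝕜 := ℂ)
      !![(Real.sqrt r : ℂ), ((1 : ℂ) - (r : ℂ)); 0, (Real.sqrt r : ℂ)]) = {1, (r : ℂ) ^ 2} := by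
  rw [← star_eq_adjoint, ← map_star, ← map_mul, AlgEquiv.spectrum_eq]
  have hs : (Real.sqrt r : ℂ) ^ 2 = r := by exact_mod_cast Real.sq_sqrt hr
  ext z
  rw [Matrix.mem_spectrum_fin_two_iff, Matrix.trace_fin_two, Matrix.det_fin_two]
  simp only [Matrix.mul_apply, Matrix.star_apply, Matrix.of_apply, Matrix.cons_val',
    Matrix.cons_val_zero, Matrix.cons_val_one, Matrix.cons_val_fin_one, RCLike.star_def,
    Fin.sum_univ_two, Complex.conj_ofReal, map_zero, mul_zero, add_zero, map_sub, map_one,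
    zero_mul, Set.mem_insert_iff, Set.mem_singleton_iff]
  trans (z - 1) * (z - (r : ℂ) ^ 2) = 0
  · constructor <;> intro h
    · linear_combination h + (2 * z - (Real.sqrt r : ℂ) ^ 2 - r) * hs
    · linear_combination h + (-2 * z + (Real.sqrt r : ℂ) ^ 2 + r) * hs
  · simp [sub_eq_zero]

theorem norm_derivative_eval_div_mul_norm_eq {r : ℝ} (hr0 : 0 < r) (hr1 : r ≤ 1) (n : ℕ) :
    ‖(derivative (X ^ (2 * n) - C ((r : ℂ) ^ n))).eval (Real.sqrt r : ℂ) /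
        (X ^ n : ℂ[X]).eval (Real.sqrt r : ℂ)‖ * ‖(1 : ℂ) - r‖ =
      2 * n * ((Real.sqrt r)⁻¹ - Real.sqrt r) * Real.sqrt r ^ n := by
  have hs0 : 0 < Real.sqrt r := Real.sqrt_pos.2 hr0
  have hsr : Real.sqrt r ^ 2 = r := Real.sq_sqrt hr0.le
  set s := Real.sqrt r
  rw [show (1 : ℂ) - r = ((1 - r : ℝ) : ℂ) by push_cast; ring, Complex.norm_of_nonneg (by linarith)]
  simp only [derivative_sub, derivative_X_pow, derivative_C, sub_zero, eval_mul, eval_C, eval_pow,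
    eval_X, norm_div, norm_mul, norm_pow, Complex.norm_natCast, Complex.norm_of_nonneg hs0.le]
  rcases n with _ | k
  · simp
  · rw [← hsr, show 2 * (k + 1) - 1 = 2 * k + 1 by omega]
    field_simp
    push_cast
    ring

theorem stmt1 (r : ℝ) (hr0 : 0 < r) (hr1 : r < 1)
    (T : EuclideanSpace ℂ (Fin 2) →L[ℂ] EuclideanSpace ℂ (Fin 2))
    (hT : T = Matrix.toEuclideanCLM (𝕜 := ℂ)
      !![(Real.sqrt r : ℂ), ((1 : ℂ) - (r : ℂ)); 0, (Real.sqrt r : ℂ)]) :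
    IsUnit T ∧
    spectrum ℂ T = {((Real.sqrt r : ℝ) : ℂ)} ∧
    spectrum ℂ T ⊆ openAnnulus r ∧
    ‖T‖ = 1 ∧
    spectrum ℂ (adjoint T * T) = {(1 : ℂ), ((r : ℂ)) ^ 2} ∧
    ∃ p q : ℂ[X], (∀ z ∈ closedAnnulus r, q.eval z ≠ 0) ∧
      sSup ((fun z => ‖p.eval z / q.eval z‖) '' closedAnnulus r) <
        ‖aeval T p * Ring.inverse (aeval T q)‖ := by
  subst hT
  have hs0 : 0 < Real.sqrt r := Real.sqrt_pos.2 hr0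
  have hs1 : Real.sqrt r < 1 := (Real.sqrt_lt' one_pos).2 (by linarith)
  have hsr : Real.sqrt r ^ 2 = r := Real.sq_sqrt hr0.le
  have hspec : spectrum ℂ (Matrix.toEuclideanCLM (𝕜 := ℂ)
      !![(Real.sqrt r : ℂ), ((1 : ℂ) - (r : ℂ)); 0, (Real.sqrt r : ℂ)]) = {(Real.sqrt r : ℂ)} := by
    rw [AlgEquiv.spectrum_eq, Matrix.spectrum_upperTriangular_fin_two, Set.pair_eq_singleton]
  have hspec_adj := spectrum_adjoint_mul_self_toEuclideanCLM_sqrt hr0.le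
  refine ⟨(spectrum.zero_notMem_iff ℂ).1 ?_, hspec, ?_,
    CStarAlgebra.norm_eq_one_of_spectrum_star_mul_self hspec_adj ?_, hspec_adj, ?_⟩
  · rw [hspec, Set.mem_singleton_iff, eq_comm]
    exact_mod_cast hs0.ne'
  · rw [hspec, Set.singleton_subset_iff]
    refine ⟨?_, ?_⟩ <;> rw [Complex.norm_of_nonneg hs0.le]
    · nlinarith
    · exact hs1
  · rw [norm_pow, Complex.norm_of_nonneg hr0.le]
    exact pow_le_one₀ hr0.le hr1.le
  obtain ⟨n, hn⟩ := exists_one_add_pow_lt hs0 hs1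
  refine ⟨X ^ (2 * n) - C ((r : ℂ) ^ n), X ^ n, fun z hz ↦ ?_, ?_⟩
  · simpa using pow_ne_zero n (norm_pos_iff.1 (hr0.trans_le hz.1))
  calc sSup _ ≤ 1 + r ^ n := Real.sSup_le (by
        rintro _ ⟨z, hz, rfl⟩; simpa using norm_pow_sub_div_pow_le hr0 hz n) (by positivity)
    _ < 2 * n * ((Real.sqrt r)⁻¹ - Real.sqrt r) * Real.sqrt r ^ n := by
        rwa [pow_mul, hsr] at hn
    _ = _ := (norm_derivative_eval_div_mul_norm_eq hr0 hr1.le n).symm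
    _ ≤ _ := le_norm_aeval_mul_inverse_of_eval_eq_zero _ _ _ _
        (by simp [pow_mul, ← Complex.ofReal_pow, hsr]) (by simpa using pow_ne_zero n hs0.ne')
end

section
/- Let 0 < r < 1 and let T be an invertible bounded linear operator on a complex Hilbert space H. Then T is an 𝔸_r-contraction if and only if rT⁻¹ is an 𝔸_r-contraction. -/
/-!
The map `z ↦ r / z` is an involution of the closed annulus. For invertible `T` and
`S = r T⁻¹`, the spectral mapping theorem gives `σ(S) = r / σ(T)`, and for polynomials
`p, q` of degree at most `N` the reflected polynomials `P(z) = z^N p(r/z)`, `Q(z) = z^N q(r/z)`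
satisfy `p(S) q(S)⁻¹ = P(T) Q(T)⁻¹` while `P/Q` and `p/q` take the same values on the annulus.
So the spectral-set condition for `T` implies the one for `S`, and since `r S⁻¹ = T` the
converse is the same implication applied to `S`.
-/

open Polynomial ContinuousLinearMap

/-- `T` is an `𝔸_r`-contraction: the closed annulus is a spectral set for `T`. -/
noncomputable def IsArContraction {H : Type*} [NormedAddCommGroup H] [InnerProductSpace ℂ H]
    [CompleteSpace H] (r : ℝ) (T : H →L[ℂ] H) : Prop :=
  spectrum ℂ T ⊆ closedAnnulus r ∧
  ∀ p q : ℂ[X], (∀ z ∈ closedAnnulus r, q.eval z ≠ 0) →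
    IsUnit (aeval T q) ∧
    ‖aeval T p * Ring.inverse (aeval T q)‖ ≤
      sSup ((fun z => ‖p.eval z / q.eval z‖) '' closedAnnulus r)

namespace Polynomial

theorem aeval_reflect_units {R A : Type*} [CommSemiring R] [Semiring A] [Algebra R A]
    (u : Aˣ) {N : ℕ} {f : R[X]} (hf : f.natDegree ≤ N) :
    aeval (u : A) (reflect N f) = ↑u ^ N * aeval (↑u⁻¹ : A) f := by
  refine induction_with_natDegree_le
    (fun f => aeval (u : A) (reflect N f) = ↑u ^ N * aeval (↑u⁻¹ : A) f) N (by simp)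
    (fun n c _ hn => ?_) (fun f g _ _ hf hg => by simp only [reflect_add, map_add, hf, hg, mul_add])
    f hf
  rw [reflect_C_mul_X_pow, revAt_le hn]
  simp only [map_mul, aeval_C, aeval_X_pow, ← Algebra.smul_def, mul_smul_comm]
  rw [← Units.val_pow_eq_pow_val, ← Units.val_pow_eq_pow_val, ← Units.val_pow_eq_pow_val,
    ← Units.val_mul, inv_pow, ← pow_sub u hn]

theorem commute_aeval_pow {R A : Type*} [CommSemiring R] [Semiring A] [Algebra R A]
    (x : A) (n : ℕ) (p : R[X]) : Commute (x ^ n) (aeval x p) := by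
  simpa using (commute_X_pow p n).map (aeval x)

section ReflectScaled

variable {R : Type*} [CommRing R]

noncomputable def reflectScaled (c : R) (N : ℕ) (p : R[X]) : R[X] :=
  reflect N (p.comp (C c * X))

theorem aeval_reflectScaled {A : Type*} [Ring A] [Algebra R A] (c : R) (u : Aˣ) {N : ℕ}
    {p : R[X]} (hp : p.natDegree ≤ N) :
    aeval (u : A) (reflectScaled c N p) = ↑u ^ N * aeval (c • (↑u⁻¹ : A)) p := by
  have hdeg : (p.comp (C c * X)).natDegree ≤ N :=
    natDegree_comp_le.trans <| (Nat.mul_le_mul_left _ <|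
      (natDegree_C_mul_le _ _).trans natDegree_X_le).trans ((mul_one _).le.trans hp)
  rw [reflectScaled, aeval_reflect_units u hdeg, aeval_comp, map_mul, aeval_C, aeval_X,
    Algebra.smul_def]

theorem eval_reflectScaled {K : Type*} [Field K] (c : K) {N : ℕ} {p : K[X]}
    (hp : p.natDegree ≤ N) {z : K} (hz : z ≠ 0) :
    (reflectScaled c N p).eval z = z ^ N * p.eval (c / z) := by
  simpa [coe_aeval_eq_eval, div_eq_mul_inv] using aeval_reflectScaled c (Units.mk0 z hz) hp

end ReflectScaled

end Polynomial

open Pointwise in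
theorem spectrum_smul_units_inv {𝕜 A : Type*} [Field 𝕜] [Ring A] [Algebra 𝕜 A] {c : 𝕜}
    (hc : c ≠ 0) (u : Aˣ) :
    spectrum 𝕜 (c • (↑u⁻¹ : A)) = (fun z => c / z) '' spectrum 𝕜 (u : A) := by
  rw [← Units.smul_mk0 hc, spectrum.unit_smul_eq_smul, ← spectrum.map_inv,
    ← Set.image_inv_eq_inv, Units.smul_def, ← Set.image_smul, Set.image_image]
  simp [div_eq_mul_inv]

theorem Units.inv_mul_mul_inverse_inv_mul {M : Type*} [MonoidWithZero M] (u : Mˣ) {a b : M}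
    (hb : IsUnit b) (hua : Commute ↑u a) (hub : Commute ↑u b) :
    ↑u⁻¹ * a * Ring.inverse (↑u⁻¹ * b) = a * Ring.inverse b := by
  obtain ⟨v, rfl⟩ := hb
  rw [← Units.val_mul, Ring.inverse_unit, Ring.inverse_unit, mul_inv_rev, inv_inv, Units.val_mul,
    mul_assoc, Units.inv_mul_eq_iff_eq_mul, ← mul_assoc,
    (hua.mul_right hub.units_inv_right).eq]

section Annulus

variable {r : ℝ} (hr : 0 < r)
include hr

theorem ne_zero_of_mem_closedAnnulus {z : ℂ} (hz : z ∈ closedAnnulus r) : z ≠ 0 :=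
  norm_pos_iff.mp (hr.trans_le hz.1)

theorem div_mem_closedAnnulus {z : ℂ} (hz : z ∈ closedAnnulus r) :
    (r : ℂ) / z ∈ closedAnnulus r := by
  have hz0 : 0 < ‖z‖ := hr.trans_le hz.1
  have hnorm : ‖(r : ℂ) / z‖ = r / ‖z‖ := by
    rw [norm_div, Complex.norm_real, Real.norm_of_nonneg hr.le]
  refine ⟨?_, ?_⟩
  · rw [hnorm, le_div_iff₀ hz0]
    exact mul_le_of_le_one_right hr.le hz.2
  · rw [hnorm, div_le_one hz0]
    exact hz.1

theorem image_div_closedAnnulus :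
    (fun z => (r : ℂ) / z) '' closedAnnulus r = closedAnnulus r := by
  refine Set.Subset.antisymm ?_ fun z hz => ?_
  · rintro _ ⟨z, hz, rfl⟩
    exact div_mem_closedAnnulus hr hz
  refine ⟨(r : ℂ) / z, div_mem_closedAnnulus hr hz, ?_⟩
  have : (r : ℂ) ≠ 0 := by exact_mod_cast hr.ne'
  field_simp [ne_zero_of_mem_closedAnnulus hr hz]

theorem image_norm_div_reflectScaled {N : ℕ} {p q : ℂ[X]} (hp : p.natDegree ≤ N)
    (hq : q.natDegree ≤ N) :
    (fun z => ‖(reflectScaled (r : ℂ) N p).eval z / (reflectScaled (r : ℂ) N q).eval z‖) ''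
      closedAnnulus r = (fun z => ‖p.eval z / q.eval z‖) '' closedAnnulus r := by
  conv_rhs => rw [← image_div_closedAnnulus hr, Set.image_image]
  refine Set.image_congr fun z hz => ?_
  have hz0 := ne_zero_of_mem_closedAnnulus hr hz
  rw [eval_reflectScaled _ hp hz0, eval_reflectScaled _ hq hz0,
    mul_div_mul_left _ _ (pow_ne_zero N hz0)]

end Annulus

theorem IsArContraction.smul_inv {H : Type*} [NormedAddCommGroup H] [InnerProductSpace ℂ H]
    [CompleteSpace H] {r : ℝ} (hr : 0 < r) {U : (H →L[ℂ] H)ˣ}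
    (h : IsArContraction r (U : H →L[ℂ] H)) :
    IsArContraction r ((r : ℂ) • (↑U⁻¹ : H →L[ℂ] H)) := by
  have hrC : (r : ℂ) ≠ 0 := by exact_mod_cast hr.ne'
  refine ⟨?_, fun p q hq => ?_⟩
  · rw [spectrum_smul_units_inv hrC, ← image_div_closedAnnulus hr]
    exact Set.image_mono h.1
  set N := max p.natDegree q.natDegree
  set P := reflectScaled (r : ℂ) N p
  set Q := reflectScaled (r : ℂ) N q
  have hpN : p.natDegree ≤ N := le_max_left _ _
  have hqN : q.natDegree ≤ N := le_max_right _ _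
  have hU (f : ℂ[X]) (hf : f.natDegree ≤ N) :
      aeval ((r : ℂ) • (↑U⁻¹ : H →L[ℂ] H)) f =
        ↑(U ^ N)⁻¹ * aeval (U : H →L[ℂ] H) (reflectScaled (r : ℂ) N f) :=
    (Units.eq_inv_mul_iff_mul_eq _).mpr
      (by rw [Units.val_pow_eq_pow_val, aeval_reflectScaled _ _ hf])
  have hQ : ∀ z ∈ closedAnnulus r, Q.eval z ≠ 0 := fun z hz => by
    have hz0 := ne_zero_of_mem_closedAnnulus hr hz
    rw [eval_reflectScaled _ hqN hz0]
    exact mul_ne_zero (pow_ne_zero N hz0) (hq _ (div_mem_closedAnnulus hr hz))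
  obtain ⟨hQu, hbound⟩ := h.2 P Q hQ
  refine ⟨hU q hqN ▸ (U ^ N)⁻¹.isUnit.mul hQu, ?_⟩
  have hcomm (f : ℂ[X]) : Commute (↑(U ^ N) : H →L[ℂ] H) (aeval (U : H →L[ℂ] H) f) := by
    rw [Units.val_pow_eq_pow_val]
    exact commute_aeval_pow _ _ _
  rw [hU p hpN, hU q hqN, Units.inv_mul_mul_inverse_inv_mul _ hQu (hcomm P) (hcomm Q),
    ← image_norm_div_reflectScaled hr hpN hqN]
  exact hbound

theorem stmt2_general {H : Type*} [NormedAddCommGroup H] [InnerProductSpace ℂ H] [CompleteSpace H]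
    (r : ℝ) (hr0 : 0 < r) (T : H →L[ℂ] H) (hTu : IsUnit T) :
    IsArContraction r T ↔ IsArContraction r ((r : ℂ) • Ring.inverse T) := by
  obtain ⟨U, rfl⟩ := hTu
  have hrC : (r : ℂ) ≠ 0 := by exact_mod_cast hr0.ne'
  let V : (H →L[ℂ] H)ˣ :=
    ⟨(r : ℂ) • ↑U⁻¹, (r : ℂ)⁻¹ • ↑U,
      by rw [smul_mul_smul_comm, Units.inv_mul, mul_inv_cancel₀ hrC, one_smul],
      by rw [smul_mul_smul_comm, Units.mul_inv, inv_mul_cancel₀ hrC, one_smul]⟩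
  have hVU : (r : ℂ) • (↑V⁻¹ : H →L[ℂ] H) = U := smul_inv_smul₀ hrC _
  rw [Ring.inverse_unit]
  refine ⟨IsArContraction.smul_inv hr0, fun h => ?_⟩
  rw [← hVU]
  exact IsArContraction.smul_inv hr0 h

theorem stmt2 {H : Type*} [NormedAddCommGroup H] [InnerProductSpace ℂ H] [CompleteSpace H]
    (r : ℝ) (hr0 : 0 < r) (hr1 : r < 1) (T : H →L[ℂ] H) (hTu : IsUnit T) :
    IsArContraction r T ↔ IsArContraction r ((r : ℂ) • Ring.inverse T) :=
  stmt2_general r hr0 T hTu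
end

section
/- Let 0 < r < 1, let T be an 𝔸_r-contraction on a complex Hilbert space H, let N be an 𝔸_r-unitary on a complex Hilbert space K, and let V : H → K be an isometric linear embedding. Then the following are equivalent: (1) for all polynomials p, q₁, q₂ ∈ ℂ[z] such that every zero of q₁ lies in ℂ ∖ cl(𝔻) and every zero of q₂ lies in r𝔻, one has p(T) q₁(T)⁻¹ q₂(T)⁻¹ = V* (p(N) q₁(N)⁻¹ q₂(N)⁻¹) V; (2) for every j ∈ ℤ, T^j = V* N^j V (where negative powers are powers of the inverses; both T and N are invertible since 0 ∉ σ(T) and 0 ∉ σ(N)). -/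
open Polynomial ContinuousLinearMap

/-- `N` is an `𝔸_r`-unitary: a normal operator with spectrum in the boundary
`{z : |z| = 1} ∪ {z : |z| = r}` of the annulus. -/
noncomputable def IsArUnitary {K : Type*} [NormedAddCommGroup K] [InnerProductSpace ℂ K]
    [CompleteSpace K] (r : ℝ) (N : K →L[ℂ] K) : Prop :=
  adjoint N * N = N * adjoint N ∧
  spectrum ℂ N ⊆ {z : ℂ | ‖z‖ = 1 ∨ ‖z‖ = r}

/-- Integral powers of an operator: `opZpow T j = T ^ j` for `j ≥ 0` and
`(T⁻¹) ^ (-j)` for `j < 0`, where `T⁻¹ = Ring.inverse T`. -/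
noncomputable def opZpow {H : Type*} [NormedAddCommGroup H] [InnerProductSpace ℂ H]
    [CompleteSpace H] (T : H →L[ℂ] H) (j : ℤ) : H →L[ℂ] H :=
  if 0 ≤ j then T ^ j.toNat else (Ring.inverse T) ^ (-j).toNat

/-!
Put `u = (T, N)` in the Banach algebra `B(H) × B(K)`. Hypothesis (2) says that every power
`uʲ`, `j ∈ ℤ`, lies in the closed subspace `{x | x.1 = V* x.2 V}`, hence so does the closed
subalgebra `S` generated by `u` and `u⁻¹`. The spectral set property of `T` and the normality
of `N` give `‖u‖ ≤ 1` and `‖u⁻¹‖ ≤ 1/r`, so the spectrum of `u` computed in `S` (not merely in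
`B(H) × B(K)`) lies in the closed annulus. By the spectral mapping theorem `q(u)` is then
invertible in `S` for every `q` with no zeros on the annulus, so `p(u) q₁(u)⁻¹ q₂(u)⁻¹ ∈ S`,
which is (1).
Conversely, (1) with `p = Xʲ` and with `q₂ = Xʲ` gives (2).
-/

theorem map_ringInverse_of_isUnit {M₀ N₀ F : Type*} [MonoidWithZero M₀] [MonoidWithZero N₀]
    [FunLike F M₀ N₀] [MonoidHomClass F M₀ N₀] (f : F) {a : M₀} (ha : IsUnit a) :
    f (Ring.inverse a) = Ring.inverse (f a) := by
  obtain ⟨u, rfl⟩ := ha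
  rw [Ring.inverse_unit, ← MonoidHom.coe_coe f, ← Units.coe_map_inv, ← Ring.inverse_unit,
    Units.coe_map]

theorem Prod.ringInverse_of_isUnit {M₀ N₀ : Type*} [MonoidWithZero M₀] [MonoidWithZero N₀]
    {x : M₀ × N₀} (hx : IsUnit x) : Ring.inverse x = (Ring.inverse x.1, Ring.inverse x.2) :=
  Prod.ext (map_ringInverse_of_isUnit (MonoidHom.fst _ _) hx)
    (map_ringInverse_of_isUnit (MonoidHom.snd _ _) hx)

theorem isUnit_aeval_of_eval_ne_zero {A : Type*} [Ring A] [Algebra ℂ A] {a : A} {q : ℂ[X]}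
    (hq0 : q ≠ 0) (hq : ∀ z ∈ spectrum ℂ a, q.eval z ≠ 0) : IsUnit (aeval a q) := by
  rcases le_or_gt q.degree 0 with hdeg | hdeg
  · rw [eq_C_of_degree_le_zero hdeg] at hq0 ⊢
    rw [aeval_C]
    exact (isUnit_iff_ne_zero.2 (C_ne_zero.1 hq0)).map _
  · rw [← spectrum.zero_notMem_iff ℂ, spectrum.map_polynomial_aeval_of_degree_pos a q hdeg]
    rintro ⟨z, hz, hz0⟩
    exact hq z hz hz0

theorem topologicalClosure_adjoin_subset {R A : Type*} [CommSemiring R] [TopologicalSpace A]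
    [Ring A] [Algebra R A] [IsTopologicalRing A] (u : Aˣ) {C : Submodule R A}
    (hC : IsClosed (C : Set A)) (hu : ∀ j : ℤ, ((u ^ j : Aˣ) : A) ∈ C) :
    ((Algebra.adjoin R {(u : A), ↑u⁻¹}).topologicalClosure : Set A) ⊆ C := by
  refine closure_minimal ?_ hC
  have hzpow : Submonoid.closure {(u : A), ↑u⁻¹} ≤
      MonoidHom.mrange ((Units.coeHom A).comp (zpowersHom Aˣ u)) :=
    Submonoid.closure_le.2 (by
      rintro _ (rfl | rfl)
      exacts [⟨Multiplicative.ofAdd 1, by simp⟩, ⟨Multiplicative.ofAdd (-1), by simp⟩])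
  have hadjoin : Subalgebra.toSubmodule (Algebra.adjoin R {(u : A), ↑u⁻¹}) ≤ C := by
    rw [Algebra.adjoin_eq_span, Submodule.span_le]
    rintro _ hx
    obtain ⟨j, rfl⟩ := hzpow hx
    exact hu j.toAdd
  exact hadjoin

section BanachAlgebra

variable {A : Type*} [NormedRing A] [NormedAlgebra ℂ A] [CompleteSpace A]

-- `‖1‖ ≤ 1` rather than `NormOneClass A`, which fails in the zero algebra.
theorem spectrum_subset_closedAnnulus {r : ℝ} (hr : 0 < r) (h1 : ‖(1 : A)‖ ≤ 1) (u : Aˣ)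
    (hu : ‖(u : A)‖ ≤ 1) (hu_inv : ‖(↑u⁻¹ : A)‖ ≤ r⁻¹) :
    spectrum ℂ (u : A) ⊆ closedAnnulus r := by
  have norm_le {a : A} {k : ℂ} (hk : k ∈ spectrum ℂ a) : ‖k‖ ≤ ‖a‖ := by
    by_contra! hlt
    exact hk (spectrum.mem_resolventSet_of_norm_lt_mul
      ((mul_le_of_le_one_right (norm_nonneg a) h1).trans_lt hlt))
  intro k hk
  have hk0 : k ≠ 0 := fun h => spectrum.zero_notMem ℂ u.isUnit (h ▸ hk)
  have hk_inv : k⁻¹ ∈ spectrum ℂ (↑u⁻¹ : A) :=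
    spectrum.inv_mem_iff (r := Units.mk0 k hk0).1 hk
  refine ⟨?_, (norm_le hk).trans hu⟩
  have := (norm_le hk_inv).trans hu_inv
  rw [norm_inv] at this
  exact (inv_le_inv₀ (norm_pos_iff.2 hk0) hr).1 this

theorem isUnit_aeval_and_ringInverse_mem_topologicalClosure {r : ℝ} (hr : 0 < r) (hr1 : r ≤ 1)
    (h1 : ‖(1 : A)‖ ≤ 1) (u : Aˣ) (hu : ‖(u : A)‖ ≤ 1) (hu_inv : ‖(↑u⁻¹ : A)‖ ≤ r⁻¹) {q : ℂ[X]}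
    (hq : ∀ z ∈ closedAnnulus r, q.eval z ≠ 0) :
    IsUnit (aeval (u : A) q) ∧
      Ring.inverse (aeval (u : A) q) ∈ (Algebra.adjoin ℂ {(u : A), ↑u⁻¹}).topologicalClosure := by
  set B := Algebra.adjoin ℂ {(u : A), ↑u⁻¹}
  set S := B.topologicalClosure
  have : CompleteSpace S := B.isClosed_topologicalClosure.completeSpace_coe
  have mem_S {x : A} (hx : x ∈ ({(u : A), ↑u⁻¹} : Set A)) : x ∈ S :=
    B.le_topologicalClosure (Algebra.subset_adjoin hx)
  let m : Sˣ := ⟨⟨u, mem_S (by simp)⟩, ⟨↑u⁻¹, mem_S (by simp)⟩,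
    Subtype.ext u.mul_inv, Subtype.ext u.inv_mul⟩
  have hσ : spectrum ℂ (m : S) ⊆ closedAnnulus r :=
    spectrum_subset_closedAnnulus (A := S) hr h1 m hu hu_inv
  have hq0 : q ≠ 0 := by
    rintro rfl
    exact hq 1 ⟨by simpa using hr1, by simp⟩ (eval_zero)
  have hunit : IsUnit (aeval (m : S) q) :=
    isUnit_aeval_of_eval_ne_zero hq0 fun z hz => hq z (hσ hz)
  have hval : S.val (aeval (m : S) q) = aeval (u : A) q := (aeval_algHom_apply S.val _ q).symm
  rw [← hval, ← map_ringInverse_of_isUnit S.val hunit]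
  exact ⟨hunit.map S.val, (Ring.inverse (aeval (m : S) q)).2⟩

end BanachAlgebra

section Compression

variable {𝕜 E F : Type*} [NontriviallyNormedField 𝕜] [NormedAddCommGroup E] [NormedSpace 𝕜 E]
  [NormedAddCommGroup F] [NormedSpace 𝕜 F]

def compressionLocus (W : F →L[𝕜] E) (V : E →L[𝕜] F) :
    Submodule 𝕜 ((E →L[𝕜] E) × (F →L[𝕜] F)) where
  carrier := {x | x.1 = W ∘L x.2 ∘L V}
  add_mem' := by
    rintro x y hx hy
    simp_all [ContinuousLinearMap.add_comp, ContinuousLinearMap.comp_add]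
  zero_mem' := by simp
  smul_mem' := by
    rintro c x hx
    simp_all [ContinuousLinearMap.smul_comp]

theorem isClosed_compressionLocus (W : F →L[𝕜] E) (V : E →L[𝕜] F) :
    IsClosed (compressionLocus W V : Set ((E →L[𝕜] E) × (F →L[𝕜] F))) :=
  isClosed_eq continuous_fst ((continuous_const.clm_comp continuous_snd).clm_comp continuous_const)

end Compression

section Operators

variable {H : Type*} [NormedAddCommGroup H] [InnerProductSpace ℂ H] [CompleteSpace H] {r : ℝ}

theorem opZpow_val (u : (H →L[ℂ] H)ˣ) (j : ℤ) : opZpow (u : H →L[ℂ] H) j = ↑(u ^ j) := by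
  rw [opZpow]
  split_ifs with h
  · lift j to ℕ using h
    rw [zpow_natCast, Units.val_pow_eq_pow_val, Int.toNat_natCast]
  · obtain ⟨n, rfl⟩ : ∃ n : ℕ, j = -(n : ℤ) := ⟨(-j).toNat, by omega⟩
    rw [zpow_neg, zpow_natCast, ← inv_pow, Units.val_pow_eq_pow_val, Ring.inverse_unit, neg_neg,
      Int.toNat_natCast]

namespace IsArContraction

variable {T : H →L[ℂ] H}

theorem isUnit (hT : IsArContraction r T) (hr : 0 < r) : IsUnit T :=
  (spectrum.zero_notMem_iff ℂ).1 fun h0 => (hr.trans_le (hT.1 h0).1).ne' norm_zero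

theorem norm_le_of_forall_closedAnnulus (hT : IsArContraction r T) {p q : ℂ[X]}
    (hq : ∀ z ∈ closedAnnulus r, q.eval z ≠ 0) {c : ℝ} (hc : 0 ≤ c)
    (hpq : ∀ z ∈ closedAnnulus r, ‖p.eval z / q.eval z‖ ≤ c) :
    ‖aeval T p * Ring.inverse (aeval T q)‖ ≤ c :=
  (hT.2 p q hq).2.trans (Real.sSup_le (by rintro _ ⟨z, hz, rfl⟩; exact hpq z hz) hc)

theorem norm_le_one (hT : IsArContraction r T) : ‖T‖ ≤ 1 := by
  simpa using hT.norm_le_of_forall_closedAnnulus (p := X) (q := 1) (by simp) zero_le_one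
    (fun z hz => by simpa using hz.2)

theorem norm_ringInverse_le (hT : IsArContraction r T) (hr : 0 < r) :
    ‖Ring.inverse T‖ ≤ r⁻¹ := by
  have hX : ∀ z ∈ closedAnnulus r, (X : ℂ[X]).eval z ≠ 0 := fun z hz => by
    simpa using norm_pos_iff.1 (hr.trans_le hz.1)
  simpa using hT.norm_le_of_forall_closedAnnulus (p := 1) (q := X) hX (inv_nonneg.2 hr.le)
    (fun z hz => by simpa using inv_anti₀ hr hz.1)

end IsArContraction

namespace IsArUnitary

variable {N : H →L[ℂ] H}

theorem isStarNormal (hN : IsArUnitary r N) : IsStarNormal N :=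
  ⟨by rw [star_eq_adjoint]; exact hN.1⟩

theorem isUnit (hN : IsArUnitary r N) (hr : 0 < r) : IsUnit N := by
  rw [← spectrum.zero_notMem_iff ℂ]
  intro h0
  rcases hN.2 h0 with h | h <;> rw [norm_zero] at h <;> linarith

theorem norm_le_one (hN : IsArUnitary r N) (hr1 : r ≤ 1) : ‖N‖ ≤ 1 := by
  have := hN.isStarNormal
  rw [← cfc_id' ℂ N]
  refine norm_cfc_le zero_le_one fun z hz => ?_
  rcases hN.2 hz with h | h <;> simp [h, hr1]

theorem norm_ringInverse_le (hN : IsArUnitary r N) (hr : 0 < r) (hr1 : r ≤ 1) :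
    ‖Ring.inverse N‖ ≤ r⁻¹ := by
  have := hN.isStarNormal
  rw [← cfc_ringInverse_id (R := ℂ) N (hN.isUnit hr)]
  refine norm_cfc_le (inv_nonneg.2 hr.le) fun z hz => ?_
  rcases hN.2 hz with h | h <;> simp [h, one_le_inv₀ hr, hr1]

end IsArUnitary

end Operators

theorem val_zpow_eq_opZpow {H K : Type*} [NormedAddCommGroup H] [InnerProductSpace ℂ H]
    [CompleteSpace H] [NormedAddCommGroup K] [InnerProductSpace ℂ K] [CompleteSpace K]
    (u : ((H →L[ℂ] H) × (K →L[ℂ] K))ˣ) (j : ℤ) :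
    (u ^ j).val = (opZpow u.val.1 j, opZpow u.val.2 j) := by
  have h₁ := opZpow_val (Units.map (MonoidHom.fst _ _) u) j
  have h₂ := opZpow_val (Units.map (MonoidHom.snd _ _) u) j
  rw [← map_zpow, Units.coe_map, Units.coe_map] at h₁ h₂
  exact Prod.ext h₁.symm h₂.symm

theorem stmt6_general {H K : Type*} [NormedAddCommGroup H] [InnerProductSpace ℂ H] [CompleteSpace H]
    [NormedAddCommGroup K] [InnerProductSpace ℂ K] [CompleteSpace K]
    (r : ℝ) (hr0 : 0 < r) (hr1 : r < 1)
    (T : H →L[ℂ] H) (hT : IsArContraction r T)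
    (N : K →L[ℂ] K) (hN : IsArUnitary r N)
    (V : H →L[ℂ] K) :
    (∀ p q₁ q₂ : ℂ[X],
        (∀ z : ℂ, q₁.eval z = 0 → 1 < ‖z‖) →
        (∀ z : ℂ, q₂.eval z = 0 → ‖z‖ < r) →
        aeval T p * Ring.inverse (aeval T q₁) * Ring.inverse (aeval T q₂) =
          adjoint V ∘L (aeval N p * Ring.inverse (aeval N q₁) * Ring.inverse (aeval N q₂)) ∘L V)
      ↔ (∀ j : ℤ, opZpow T j = adjoint V ∘L opZpow N j ∘L V) := by
  constructor
  · intro h j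
    rw [opZpow, opZpow]
    split_ifs
    · simpa using h (X ^ j.toNat) 1 1 (by simp) (by simp)
    · simpa [← Ring.inverse_pow] using h 1 1 (X ^ (-j).toNat) (by simp)
        (fun z hz => by simp_all)
  · intro h p q₁ q₂ hq₁ hq₂
    obtain ⟨u, hu⟩ : IsUnit (T, N) := Prod.isUnit_iff.2 ⟨hT.isUnit hr0, hN.isUnit hr0⟩
    have hu_inv : ‖(↑u⁻¹ : (H →L[ℂ] H) × (K →L[ℂ] K))‖ ≤ r⁻¹ := by
      rw [← Ring.inverse_unit, Prod.ringInverse_of_isUnit u.isUnit, hu, norm_prod_le_iff]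
      exact ⟨hT.norm_ringInverse_le hr0, hN.norm_ringInverse_le hr0 hr1.le⟩
    have key {q : ℂ[X]} (hq : ∀ z ∈ closedAnnulus r, q.eval z ≠ 0) :=
      isUnit_aeval_and_ringInverse_mem_topologicalClosure hr0 hr1.le
        (norm_prod_le_iff.2 ⟨norm_id_le, norm_id_le⟩) u
        (by rw [hu, norm_prod_le_iff]; exact ⟨hT.norm_le_one, hN.norm_le_one hr1.le⟩) hu_inv hq
    obtain ⟨hunit₁, hmem₁⟩ := key fun z hz h0 => (hq₁ z h0).not_ge hz.2
    obtain ⟨hunit₂, hmem₂⟩ := key fun z hz h0 => (hq₂ z h0).not_ge hz.1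
    have hmem_p : aeval (u : (H →L[ℂ] H) × (K →L[ℂ] K)) p ∈
        (Algebra.adjoin ℂ {(u : (H →L[ℂ] H) × (K →L[ℂ] K)), ↑u⁻¹}).topologicalClosure :=
      Subalgebra.le_topologicalClosure _
        (Algebra.adjoin_mono (by simp) (aeval_mem_adjoin_singleton ℂ _))
    have hC := topologicalClosure_adjoin_subset u (isClosed_compressionLocus (adjoint V) V)
      (fun j => by simpa [val_zpow_eq_opZpow, hu, compressionLocus] using h j)
      (mul_mem (mul_mem hmem_p hmem₁) hmem₂)
    simp only [hu, aeval_prod_apply] at hunit₁ hunit₂ hC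
    rwa [Prod.ringInverse_of_isUnit hunit₁, Prod.ringInverse_of_isUnit hunit₂] at hC

theorem stmt6 {H K : Type*} [NormedAddCommGroup H] [InnerProductSpace ℂ H] [CompleteSpace H]
    [NormedAddCommGroup K] [InnerProductSpace ℂ K] [CompleteSpace K]
    (r : ℝ) (hr0 : 0 < r) (hr1 : r < 1)
    (T : H →L[ℂ] H) (hT : IsArContraction r T)
    (N : K →L[ℂ] K) (hN : IsArUnitary r N)
    (V : H →L[ℂ] K) (hV : ∀ h : H, ‖V h‖ = ‖h‖) :
    (∀ p q₁ q₂ : ℂ[X],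
        (∀ z : ℂ, q₁.eval z = 0 → 1 < ‖z‖) →
        (∀ z : ℂ, q₂.eval z = 0 → ‖z‖ < r) →
        aeval T p * Ring.inverse (aeval T q₁) * Ring.inverse (aeval T q₂) =
          adjoint V ∘L (aeval N p * Ring.inverse (aeval N q₁) * Ring.inverse (aeval N q₂)) ∘L V)
      ↔ (∀ j : ℤ, opZpow T j = adjoint V ∘L opZpow N j ∘L V) :=
  stmt6_general r hr0 hr1 T hT N hN V
end
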